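/- arXiv:2203.05276 — 2 statements merged into one kernel-verified Lean document; each statement's English description precedes it below -/
import Mathlib

section
/- Let x* be a local minimizer of the problem: minimize q(x) := f(x) + g(x) subject to c(x) ∈ D, where f, c are continuously differentiable, g : ℝ^n → ℝ ∪ {∞} is proper lsc, and D ⊆ ℝ^m is nonempty closed. Then x* is asymptotically M-stationary: there exist sequences xᵏ → x* with q(xᵏ) → q(x*), ηᵏ → 0 in ℝ^n, ζᵏ → 0 in ℝ^m, and yᵏ ∈ ℝ^m, such that for all k: −∇c(xᵏ)ᵀ yᵏ + ηᵏ ∈ ∂q(xᵏ) and yᵏ ∈ N^lim_D(c(xᵏ) + ζᵏ). -/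
open Metric Filter Topology
open scoped RealInnerProductSpace

noncomputable section

variable {E : Type*} [NormedAddCommGroup E] [InnerProductSpace ℝ E]

/-- The (possibly set-valued) metric projection onto `D`. -/
def projSet (D : Set E) (v : E) : Set E :=
  {z | z ∈ D ∧ ‖v - z‖ = Metric.infDist v D}

/-- The limiting (Mordukhovich) normal cone to `D` at `z`,
`N^lim_D(z) = limsup_{v → z} cone (v - proj_D v)`, empty outside `D`. -/
def limNormalCone (D : Set E) (z : E) : Set E :=
  {w | z ∈ D ∧ ∃ (v : ℕ → E) (u : ℕ → E),
      Filter.Tendsto v Filter.atTop (nhds z) ∧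
      Filter.Tendsto u Filter.atTop (nhds w) ∧
      ∀ k, ∃ (lam : ℝ) (p : E), 0 ≤ lam ∧ p ∈ projSet D (v k) ∧ u k = lam • (v k - p)}

/-- The regular (Fréchet) subdifferential of `h : E → ℝ ∪ {∞}` at `x`. -/
def RegSubdiff (h : E → WithTop ℝ) (x : E) : Set E :=
  {v | ∃ hx : ℝ, h x = (hx : WithTop ℝ) ∧
    ∀ ε : ℝ, 0 < ε → ∀ᶠ y in nhds x,
      ((hx + (inner ℝ v (y - x) : ℝ) - ε * ‖y - x‖ : ℝ) : WithTop ℝ) ≤ h y}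

/-- The limiting (Mordukhovich) subdifferential of `h` at `x`:
limits of regular subgradients along `h`-attentive sequences. -/
def LimSubdiff (h : E → WithTop ℝ) (x : E) : Set E :=
  {v | ∃ (xs : ℕ → E) (vs : ℕ → E) (hs : ℕ → ℝ) (hx : ℝ),
      h x = (hx : WithTop ℝ) ∧ (∀ k, h (xs k) = ((hs k : ℝ) : WithTop ℝ)) ∧
      Filter.Tendsto xs Filter.atTop (nhds x) ∧
      Filter.Tendsto hs Filter.atTop (nhds hx) ∧
      Filter.Tendsto vs Filter.atTop (nhds v) ∧
      ∀ k, vs k ∈ RegSubdiff h (xs k)}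

/-- The (possibly set-valued) proximal mapping of `h` with stepsize `γ`. -/
def proxSet (γ : ℝ) (h : E → WithTop ℝ) (x : E) : Set E :=
  {z | ∀ w : E, h z + ((‖z - x‖ ^ 2 / (2 * γ) : ℝ) : WithTop ℝ)
      ≤ h w + ((‖w - x‖ ^ 2 / (2 * γ) : ℝ) : WithTop ℝ)}

/-!
Quadratic penalty argument. For `ρₖ = k + 1` minimize
`q x + ρₖ / 2 · dist(c x, D)² + ½ ‖x - x*‖²` over a closed ball on which `x*` is a constrained
minimizer. Comparing with `x*` bounds the penalty, so `dist(c xₖ, D) → 0`; the proximal term and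
lower semicontinuity then force `xₖ → x*` and `q xₖ → q x*`. Eventually `xₖ` is interior, and
replacing the distance by `‖c x - zₖ‖` for a projection `zₖ` of `c xₖ` onto `D` gives a smooth
majorant touching at `xₖ`. Fermat's rule yields `-∇c(xₖ)ᵀ yₖ + (x* - xₖ) ∈ ∂̂q(xₖ)` with
`yₖ = ρₖ (c xₖ - zₖ)`, a proximal, hence limiting, normal to `D` at `zₖ = c xₖ + ζₖ`.
-/

variable {F : Type*} [NormedAddCommGroup F] [InnerProductSpace ℝ F]

namespace WithTop

lemma coe_lt_add_coe_iff {a r : ℝ} {t : WithTop ℝ} :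
    (a : WithTop ℝ) < t + r ↔ ((a - r : ℝ) : WithTop ℝ) < t := by
  induction t with
  | top => simp only [top_add, coe_lt_top]
  | coe t => norm_cast; constructor <;> intro <;> linarith

lemma coe_le_add_coe_iff {a r : ℝ} {t : WithTop ℝ} :
    (a : WithTop ℝ) ≤ t + r ↔ ((a - r : ℝ) : WithTop ℝ) ≤ t := by
  induction t with
  | top => simp
  | coe t => norm_cast; constructor <;> intro <;> linarith

lemma exists_eq_coe_of_add_coe_le_coe {t : WithTop ℝ} {r b : ℝ} (h : t + r ≤ b) :
    ∃ s : ℝ, t = s ∧ s + r ≤ b := by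
  induction t with
  | top => simp at h
  | coe s => exact ⟨s, rfl, by exact_mod_cast h⟩

end WithTop

theorem LowerSemicontinuous.add_coe {X : Type*} [TopologicalSpace X] {g : X → WithTop ℝ}
    {f : X → ℝ} (hg : LowerSemicontinuous g) (hf : Continuous f) :
    LowerSemicontinuous fun x => g x + f x := by
  intro x y hy
  obtain ⟨a, rfl⟩ := WithTop.ne_top_iff_exists.mp hy.ne_top
  obtain ⟨b, hab, hbg⟩ := WithTop.lt_iff_exists_coe_btwn.mp (WithTop.coe_lt_add_coe_iff.mp hy)
  have hab : a - b < f x := by linarith [WithTop.coe_lt_coe.mp hab]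
  filter_upwards [hg x b hbg, hf.continuousAt.eventually (lt_mem_nhds hab)] with x' hgx' hfx'
  refine WithTop.coe_lt_add_coe_iff.mpr (lt_trans ?_ hgx')
  exact WithTop.coe_lt_coe.mpr (by linarith)

theorem tendsto_zero_of_forall_succ_mul_sq_le {d : ℕ → ℝ} {C : ℝ} (hd : ∀ k, 0 ≤ d k)
    (h : ∀ k : ℕ, ((k : ℝ) + 1) * d k ^ 2 ≤ C) : Tendsto d atTop (𝓝 0) := by
  have hsq : Tendsto (fun k => d k ^ 2) atTop (𝓝 0) := by
    refine squeeze_zero (fun k => sq_nonneg _)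
      (fun k => (le_div_iff₀' (by positivity)).mpr (h k)) ?_
    simpa [Function.comp_def] using
      (tendsto_const_div_atTop_nhds_zero_nat C).comp (tendsto_add_atTop_nat 1)
  simpa [Real.sqrt_sq (hd _)] using hsq.sqrt

section Limits

variable {X : Type*} [NormedAddCommGroup X] {q : X → WithTop ℝ}

theorem eq_of_tendsto_of_add_sq_le (hq : LowerSemicontinuous q) {u : ℕ → X} {x x₀ : X} {b : ℝ}
    (hu : Tendsto u atTop (𝓝 x))
    (hle : ∀ k, q (u k) + ((1 / 2 * ‖u k - x₀‖ ^ 2 : ℝ) : WithTop ℝ) ≤ b)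
    (hb : b ≤ q x) : x = x₀ := by
  have hx : q x + ((1 / 2 * ‖x - x₀‖ ^ 2 : ℝ) : WithTop ℝ) ≤ b :=
    ((hq.add_coe (f := fun y => 1 / 2 * ‖y - x₀‖ ^ 2) (by fun_prop)).isClosed_preimage b
      ).mem_of_tendsto hu (Eventually.of_forall hle)
  have : b + 1 / 2 * ‖x - x₀‖ ^ 2 ≤ b := by
    exact_mod_cast (add_le_add_left hb _).trans hx
  rw [← sub_eq_zero, ← norm_le_zero_iff]
  nlinarith [norm_nonneg (x - x₀)]

theorem tendsto_of_lowerSemicontinuousAt_of_le {ι : Type*} {l : Filter ι} {x₀ : X}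
    (hq : LowerSemicontinuousAt q x₀) {u : ι → X} (hu : Tendsto u l (𝓝 x₀)) {s : ι → ℝ}
    (hs : ∀ k, q (u k) = s k) {b : ℝ} (hb : q x₀ = b) (hle : ∀ k, s k ≤ b) :
    Tendsto s l (𝓝 b) := by
  refine tendsto_order.mpr
    ⟨fun a ha => ?_, fun a ha => Eventually.of_forall fun k => (hle k).trans_lt ha⟩
  have ha' : (a : WithTop ℝ) < q x₀ := by rw [hb]; exact_mod_cast ha
  filter_upwards [hu.eventually (hq a ha')] with k hk
  rw [hs] at hk
  exact_mod_cast hk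

end Limits

theorem neg_mem_regSubdiff_of_isLocalMin_add {h : E → WithTop ℝ} {φ : E → ℝ} {x v : E}
    (hx : h x ≠ ⊤) (hmin : IsLocalMin (fun y => h y + φ y) x)
    (hφ : HasFDerivAt φ (innerSL ℝ v) x) : -v ∈ RegSubdiff h x := by
  obtain ⟨a, ha⟩ := WithTop.ne_top_iff_exists.mp hx
  refine ⟨a, ha.symm, fun ε hε => ?_⟩
  filter_upwards [hmin, Asymptotics.isLittleO_iff.mp hφ.isLittleO hε] with y hy hφy
  rw [← ha, ← WithTop.coe_add, WithTop.coe_le_add_coe_iff] at hy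
  refine le_trans (WithTop.coe_le_coe.mpr ?_) hy
  rw [Real.norm_eq_abs, abs_le] at hφy
  simp only [innerSL_apply_apply, inner_neg_left] at hφy ⊢
  linarith [hφy.1]

theorem regSubdiff_subset_limSubdiff (h : E → WithTop ℝ) (x : E) :
    RegSubdiff h x ⊆ LimSubdiff h x := by
  rintro v ⟨a, ha, hv⟩
  exact ⟨fun _ => x, fun _ => v, fun _ => a, a, ha, fun _ => ha, tendsto_const_nhds,
    tendsto_const_nhds, tendsto_const_nhds, fun _ => ⟨a, ha, hv⟩⟩

theorem exists_mem_projSet {V : Type*} [NormedAddCommGroup V] [ProperSpace V] {D : Set V}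
    (hD : IsClosed D) (hne : D.Nonempty) (v : V) : ∃ z, z ∈ projSet D v := by
  obtain ⟨z, hz, hdist⟩ := hD.exists_infDist_eq_dist hne v
  exact ⟨z, hz, by rw [hdist, dist_eq_norm]⟩

theorem mem_projSet_add_smul_sub {V : Type*} [NormedAddCommGroup V] [NormedSpace ℝ V]
    {D : Set V} {v p : V} (hp : p ∈ projSet D v) {t : ℝ}
    (ht₀ : 0 ≤ t) (ht₁ : t ≤ 1) : p ∈ projSet D (p + t • (v - p)) := by
  obtain ⟨hpD, hpv⟩ := hp
  have hwp : ‖p + t • (v - p) - p‖ = t * ‖v - p‖ := by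
    rw [add_sub_cancel_left, norm_smul, Real.norm_of_nonneg ht₀]
  have hvw : dist v (p + t • (v - p)) = (1 - t) * ‖v - p‖ := by
    rw [dist_eq_norm, show v - (p + t • (v - p)) = (1 - t) • (v - p) by module, norm_smul,
      Real.norm_of_nonneg (by linarith)]
  refine ⟨hpD, le_antisymm ?_ (by rw [← dist_eq_norm]; exact infDist_le_dist_of_mem hpD)⟩
  rw [hwp]
  refine (le_infDist ⟨p, hpD⟩).mpr fun z hz => ?_
  have := (le_infDist ⟨p, hpD⟩).mp hpv.le hz
  linarith [dist_triangle v (p + t • (v - p)) z]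

/-- Proximal normals are limiting normals. -/
theorem smul_sub_mem_limNormalCone {D : Set E} {v z : E} (hz : z ∈ projSet D v) {a : ℝ}
    (ha : 0 ≤ a) : a • (v - z) ∈ limNormalCone D z := by
  refine ⟨hz.1, fun j => z + ((j : ℝ) + 1)⁻¹ • (v - z), fun _ => a • (v - z), ?_,
    tendsto_const_nhds, fun k => ⟨((k : ℝ) + 1) * a, z, by positivity, ?_, ?_⟩⟩
  · have h : Tendsto (fun j : ℕ => (1 / ((j : ℝ) + 1)) • (v - z)) atTop
        (𝓝 ((0 : ℝ) • (v - z))) :=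
      tendsto_one_div_add_atTop_nhds_zero_nat.smul_const _
    simpa using tendsto_const_nhds.add h
  · exact mem_projSet_add_smul_sub hz (by positivity) (inv_le_one_of_one_le₀ (by simp))
  · show a • (v - z) = _
    rw [add_sub_cancel_left, smul_smul, mul_right_comm, mul_inv_cancel₀ (by positivity), one_mul]

def penalized {X Y : Type*} [NormedAddCommGroup X] [NormedAddCommGroup Y] (q : X → WithTop ℝ)
    (c : X → Y) (D : Set Y) (x₀ : X) (ρ : ℝ) (x : X) : WithTop ℝ :=
  q x + ((ρ / 2 * infDist (c x) D ^ 2 + 1 / 2 * ‖x - x₀‖ ^ 2 : ℝ) : WithTop ℝ)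

section Penalty

variable {X Y : Type*} [NormedAddCommGroup X] [NormedAddCommGroup Y] {q : X → WithTop ℝ}
  {c : X → Y} {D : Set Y} {x₀ : X}

theorem lowerSemicontinuous_penalized (hq : LowerSemicontinuous q) (hc : Continuous c) (ρ : ℝ) :
    LowerSemicontinuous (penalized q c D x₀ ρ) :=
  hq.add_coe <| by fun_prop

theorem penalized_self (hx₀ : c x₀ ∈ D) (ρ : ℝ) :
    penalized q c D x₀ ρ x₀ = q x₀ := by
  simp [penalized, infDist_zero_of_mem hx₀]

theorem exists_tendsto_penalized_minimizers [ProperSpace X] (hq : LowerSemicontinuous q)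
    (hc : Continuous c) (hD : IsClosed D) (hcx₀ : c x₀ ∈ D) {b : ℝ} (hb : q x₀ = b) {r : ℝ}
    (hr : 0 < r) (hrmin : ∀ x ∈ closedBall x₀ r, c x ∈ D → q x₀ ≤ q x) :
    ∃ (x : ℕ → X) (s : ℕ → ℝ),
      (∀ k : ℕ, IsMinOn (penalized q c D x₀ (k + 1)) (closedBall x₀ r) (x k)) ∧
      (∀ k, q (x k) = s k) ∧ Tendsto x atTop (𝓝 x₀) ∧ Tendsto s atTop (𝓝 b) ∧
      Tendsto (fun k => infDist (c (x k)) D) atTop (𝓝 0) := by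
  have hB : IsCompact (closedBall x₀ r) := isCompact_closedBall x₀ r
  have hx₀B : x₀ ∈ closedBall x₀ r := mem_closedBall_self hr.le
  choose x hxB hxmin using fun k : ℕ =>
    ((lowerSemicontinuous_penalized hq hc (k + 1)).lowerSemicontinuousOn _).exists_isMinOn
      ⟨x₀, hx₀B⟩ hB
  choose s hs hsle using fun k : ℕ => WithTop.exists_eq_coe_of_add_coe_le_coe
    ((hxmin k hx₀B).trans_eq (by rw [penalized_self hcx₀, hb]))
  have hbound : ∀ k, q (x k) + ((1 / 2 * ‖x k - x₀‖ ^ 2 : ℝ) : WithTop ℝ) ≤ b := fun k => by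
    have : 0 ≤ ((k : ℝ) + 1) / 2 * infDist (c (x k)) D ^ 2 := by positivity
    rw [hs k, ← WithTop.coe_add, WithTop.coe_le_coe]
    linarith [hsle k]
  obtain ⟨M, hM⟩ : ∃ M, ∀ k, M ≤ s k := by
    obtain ⟨y, -, hy⟩ := (hq.lowerSemicontinuousOn _).exists_isMinOn ⟨x₀, hx₀B⟩ hB
    obtain ⟨M, hM⟩ := WithTop.ne_top_iff_exists.mp
      (ne_top_of_le_ne_top (hb ▸ WithTop.coe_ne_top) (hy hx₀B))
    exact ⟨M, fun k => WithTop.coe_le_coe.mp (hM ▸ hs k ▸ hy (hxB k))⟩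
  have hdist : Tendsto (fun k => infDist (c (x k)) D) atTop (𝓝 0) :=
    tendsto_zero_of_forall_succ_mul_sq_le (C := 2 * (b - M)) (fun _ => infDist_nonneg)
      fun k => by nlinarith [hsle k, hM k, sq_nonneg ‖x k - x₀‖]
  have hx : Tendsto x atTop (𝓝 x₀) := by
    refine tendsto_of_subseq_tendsto fun ns hns => ?_
    obtain ⟨x', hx'B, ms, hms, hlim⟩ := hB.tendsto_subseq fun j => hxB (ns j)
    have hcx' : c x' ∈ D := (hD.mem_iff_infDist_zero ⟨_, hcx₀⟩).mpr <| tendsto_nhds_unique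
      (((continuous_infDist_pt D).comp hc).continuousAt.tendsto.comp hlim)
      (hdist.comp (hns.comp hms.tendsto_atTop))
    obtain rfl := eq_of_tendsto_of_add_sq_le hq hlim (fun j => hbound _) (hb ▸ hrmin x' hx'B hcx')
    exact ⟨ms, hlim⟩
  refine ⟨x, s, hxmin, hs, hx, ?_, hdist⟩
  refine tendsto_of_lowerSemicontinuousAt_of_le (hq x₀) hx hs hb fun k => ?_
  have := hbound k
  rw [hs k, ← WithTop.coe_add, WithTop.coe_le_coe] at this
  nlinarith [sq_nonneg ‖x k - x₀‖]

end Penalty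

/-- `‖c y - z‖` majorizes `infDist (c y) D` and agrees with it at `x`, so Fermat's rule applies
to a smooth function. -/
theorem neg_adjoint_add_mem_regSubdiff_of_isLocalMin_penalized [CompleteSpace E]
    [CompleteSpace F] {q : E → WithTop ℝ} {c : E → F} {D : Set F} {x₀ x : E} {ρ : ℝ} {z : F}
    (hmin : IsLocalMin (penalized q c D x₀ ρ) x) (hqx : q x ≠ ⊤)
    (hc : DifferentiableAt ℝ c x) (hz : z ∈ projSet D (c x)) (hρ : 0 ≤ ρ) :
    -(ContinuousLinearMap.adjoint (fderiv ℝ c x)) (ρ • (c x - z)) + (x₀ - x)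
      ∈ RegSubdiff q x := by
  set φ : E → ℝ := fun y => ρ / 2 * ‖c y - z‖ ^ 2 + 1 / 2 * ‖y - x₀‖ ^ 2
  have hloc : IsLocalMin (fun y => q y + φ y) x := by
    filter_upwards [hmin] with y hy
    calc q x + (φ x : WithTop ℝ) = penalized q c D x₀ ρ x := by
          simp only [penalized, φ, hz.2]
      _ ≤ penalized q c D x₀ ρ y := hy
      _ ≤ q y + (φ y : WithTop ℝ) := by
        refine add_le_add_right (WithTop.coe_le_coe.mpr ?_) _
        show _ ≤ ρ / 2 * ‖c y - z‖ ^ 2 + 1 / 2 * ‖y - x₀‖ ^ 2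
        gcongr
        · exact infDist_nonneg
        · rw [← dist_eq_norm]
          exact infDist_le_dist_of_mem hz.1
  have hφ : HasFDerivAt φ (innerSL ℝ
      (ρ • ContinuousLinearMap.adjoint (fderiv ℝ c x) (c x - z) + (x - x₀))) x := by
    refine HasFDerivAt.congr_fderiv (((hc.hasFDerivAt.sub_const z).norm_sq.const_mul (ρ / 2)).add
      (((hasFDerivAt_id x).sub_const x₀).norm_sq.const_mul (1 / 2))) ?_
    ext u
    simp [ContinuousLinearMap.adjoint_inner_left, ← mul_assoc]
  convert neg_mem_regSubdiff_of_isLocalMin_add hqx hloc hφ using 1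
  rw [map_smul, neg_add, neg_sub]

/-- Asymptotic Mordukhovich stationarity of `x₀` for minimizing `q` subject to `c x ∈ D`. -/
def IsAMStationary [CompleteSpace E] [CompleteSpace F] (q : E → WithTop ℝ) (c : E → F)
    (D : Set F) (x₀ : E) : Prop :=
  ∃ (xs ηs : ℕ → E) (ys ζs : ℕ → F) (qs : ℕ → ℝ) (qstar : ℝ),
    q x₀ = (qstar : WithTop ℝ) ∧ (∀ k, q (xs k) = ((qs k : ℝ) : WithTop ℝ)) ∧
    Tendsto xs atTop (𝓝 x₀) ∧ Tendsto qs atTop (𝓝 qstar) ∧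
    Tendsto ηs atTop (𝓝 0) ∧ Tendsto ζs atTop (𝓝 0) ∧
    ∀ k, (-(ContinuousLinearMap.adjoint (fderiv ℝ c (xs k))) (ys k) + ηs k
            ∈ LimSubdiff q (xs k)) ∧
         ys k ∈ limNormalCone D (c (xs k) + ζs k)

theorem isAMStationary_of_isLocalMinOn [ProperSpace E] [ProperSpace F] {q : E → WithTop ℝ}
    (hq : LowerSemicontinuous q) {c : E → F} (hc : Differentiable ℝ c) {D : Set F}
    (hD : IsClosed D) {x₀ : E} (hqx₀ : q x₀ ≠ ⊤) (hcx₀ : c x₀ ∈ D)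
    (hmin : IsLocalMinOn q {x | c x ∈ D} x₀) : IsAMStationary q c D x₀ := by
  obtain ⟨b, hb⟩ := WithTop.ne_top_iff_exists.mp hqx₀
  obtain ⟨r, hr, hrmin⟩ :=
    nhds_basis_closedBall.eventually_iff.mp (eventually_nhdsWithin_iff.mp hmin)
  obtain ⟨x, s, hxmin, hs, hx, hsb, hdist⟩ :=
    exists_tendsto_penalized_minimizers hq hc.continuous hD hcx₀ hb.symm hr hrmin
  obtain ⟨N, hN⟩ := eventually_atTop.mp (hx.eventually (isOpen_ball.mem_nhds (mem_ball_self hr)))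
  choose z hz using fun k => exists_mem_projSet hD ⟨_, hcx₀⟩ (c (x k))
  have hζ : Tendsto (fun k => z k - c (x k)) atTop (𝓝 0) :=
    tendsto_zero_iff_norm_tendsto_zero.mpr (hdist.congr fun k => by rw [norm_sub_rev, (hz k).2])
  refine ⟨fun j => x (j + N), fun j => x₀ - x (j + N),
    fun j => (((j + N : ℕ) : ℝ) + 1) • (c (x (j + N)) - z (j + N)),
    fun j => z (j + N) - c (x (j + N)), fun j => s (j + N), b, hb.symm, fun j => hs _,
    (tendsto_add_atTop_iff_nat N).mpr hx, (tendsto_add_atTop_iff_nat N).mpr hsb,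
    (tendsto_add_atTop_iff_nat N).mpr (by simpa using (tendsto_const_nhds (x := x₀)).sub hx),
    (tendsto_add_atTop_iff_nat N).mpr hζ, fun j => ⟨?_, ?_⟩⟩
  · have hloc :=
      (hxmin (j + N)).isLocalMin (closedBall_mem_nhds_of_mem (hN _ (Nat.le_add_left N j)))
    exact regSubdiff_subset_limSubdiff _ _ <|
      neg_adjoint_add_mem_regSubdiff_of_isLocalMin_penalized hloc (hs _ ▸ WithTop.coe_ne_top)
        (hc _) (hz _) (by positivity)
  · simpa using
      smul_sub_mem_limNormalCone (hz (j + N)) (a := ((j + N : ℕ) : ℝ) + 1) (by positivity)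

theorem stmt8_general {n m : ℕ} (f : EuclideanSpace ℝ (Fin n) → ℝ) (hf : ContDiff ℝ 1 f)
    (g : EuclideanSpace ℝ (Fin n) → WithTop ℝ)
    (hglsc : LowerSemicontinuous g)
    (c : EuclideanSpace ℝ (Fin n) → EuclideanSpace ℝ (Fin m)) (hc : ContDiff ℝ 1 c)
    (D : Set (EuclideanSpace ℝ (Fin m))) (hDcl : IsClosed D)
    (q : EuclideanSpace ℝ (Fin n) → WithTop ℝ)
    (hq : q = fun x => ((f x : ℝ) : WithTop ℝ) + g x)
    (xstar : EuclideanSpace ℝ (Fin n))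
    (hfeas : g xstar ≠ ⊤ ∧ c xstar ∈ D)
    (hmin : ∃ ε > (0 : ℝ), ∀ x, g x ≠ ⊤ → c x ∈ D → ‖x - xstar‖ < ε → q xstar ≤ q x) :
    ∃ (xs ηs : ℕ → EuclideanSpace ℝ (Fin n)) (ys ζs : ℕ → EuclideanSpace ℝ (Fin m))
      (qs : ℕ → ℝ) (qstar : ℝ),
      q xstar = (qstar : WithTop ℝ) ∧ (∀ k, q (xs k) = ((qs k : ℝ) : WithTop ℝ)) ∧
      Filter.Tendsto xs Filter.atTop (nhds xstar) ∧
      Filter.Tendsto qs Filter.atTop (nhds qstar) ∧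
      Filter.Tendsto ηs Filter.atTop (nhds 0) ∧
      Filter.Tendsto ζs Filter.atTop (nhds 0) ∧
      ∀ k, (-(ContinuousLinearMap.adjoint (fderiv ℝ c (xs k))) (ys k) + ηs k
              ∈ LimSubdiff q (xs k)) ∧
           ys k ∈ limNormalCone D (c (xs k) + ζs k) := by
  have hqlsc : LowerSemicontinuous q := by
    rw [hq]
    simpa only [add_comm] using hglsc.add_coe hf.continuous
  have hqx : q xstar ≠ ⊤ := by simp [hq, hfeas.1]
  obtain ⟨ε, hε, hεmin⟩ := hmin
  have hlocmin : IsLocalMinOn q {x | c x ∈ D} xstar := by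
    filter_upwards [self_mem_nhdsWithin, mem_nhdsWithin_of_mem_nhds (ball_mem_nhds xstar hε)]
      with x hcx hx
    by_cases hgx : g x = ⊤
    · simp [hq, hgx]
    · exact hεmin x hgx hcx (mem_ball_iff_norm.mp hx)
  exact isAMStationary_of_isLocalMinOn hqlsc (hc.differentiable one_ne_zero) hDcl hqx hfeas.2
    hlocmin

theorem stmt8 {n m : ℕ} (f : EuclideanSpace ℝ (Fin n) → ℝ) (hf : ContDiff ℝ 1 f)
    (g : EuclideanSpace ℝ (Fin n) → WithTop ℝ)
    (hgproper : ∃ x, g x ≠ ⊤) (hglsc : LowerSemicontinuous g)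
    (c : EuclideanSpace ℝ (Fin n) → EuclideanSpace ℝ (Fin m)) (hc : ContDiff ℝ 1 c)
    (D : Set (EuclideanSpace ℝ (Fin m))) (hDne : D.Nonempty) (hDcl : IsClosed D)
    (q : EuclideanSpace ℝ (Fin n) → WithTop ℝ)
    (hq : q = fun x => ((f x : ℝ) : WithTop ℝ) + g x)
    (xstar : EuclideanSpace ℝ (Fin n))
    (hfeas : g xstar ≠ ⊤ ∧ c xstar ∈ D)
    (hmin : ∃ ε > (0 : ℝ), ∀ x, g x ≠ ⊤ → c x ∈ D → ‖x - xstar‖ < ε → q xstar ≤ q x) :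
    ∃ (xs ηs : ℕ → EuclideanSpace ℝ (Fin n)) (ys ζs : ℕ → EuclideanSpace ℝ (Fin m))
      (qs : ℕ → ℝ) (qstar : ℝ),
      q xstar = (qstar : WithTop ℝ) ∧ (∀ k, q (xs k) = ((qs k : ℝ) : WithTop ℝ)) ∧
      Filter.Tendsto xs Filter.atTop (nhds xstar) ∧
      Filter.Tendsto qs Filter.atTop (nhds qstar) ∧
      Filter.Tendsto ηs Filter.atTop (nhds 0) ∧
      Filter.Tendsto ζs Filter.atTop (nhds 0) ∧
      ∀ k, (-(ContinuousLinearMap.adjoint (fderiv ℝ c (xs k))) (ys k) + ηs k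
              ∈ LimSubdiff q (xs k)) ∧
           ys k ∈ limNormalCone D (c (xs k) + ζs k) :=
  stmt8_general f hf g hglsc c hc D hDcl q hq xstar hfeas hmin
end
end

section
/- Let q : ℝ^n → ℝ ∪ {∞} be proper lsc, c : ℝ^n → ℝ^m continuous, D ⊆ ℝ^m nonempty closed, and Y ⊆ ℝ^m bounded. Fix μ_k → 0 (μ_k > 0), ŷᵏ ∈ Y, sᵏ ∈ D, and suppose there is B ∈ ℝ with q(xᵏ) + (1/(2μ_k))‖c(xᵏ) + μ_k ŷᵏ − sᵏ‖² − (μ_k/2)‖ŷᵏ‖² ≤ B for all k. If xᵏ → x* along a subsequence, then x* ∈ dom q, c(xᵏ) − sᵏ → 0 along that subsequence, sᵏ → c(x*) along it, and c(x*) ∈ D. -/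
open Metric Filter Topology
open scoped RealInnerProductSpace

noncomputable section

variable {E : Type*} [NormedAddCommGroup E] [InnerProductSpace ℝ E]

/-
The penalty term dominates: along the subsequence `q(xᵏ) + ‖c(xᵏ) + μₖŷᵏ - sᵏ‖² / (2μₖ)` stays
bounded above, and since `q` is lower semicontinuous it is bounded below near `x*`. Hence `q(x*)`
is finite and `‖c(xᵏ) + μₖŷᵏ - sᵏ‖² = O(μₖ) → 0`; as `μₖŷᵏ → 0`, also `c(xᵏ) - sᵏ → 0`, so
`sᵏ → c(x*)`, which lies in `D` because `D` is closed.
-/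

lemma le_coe_sub_of_add_coe_le {a : WithTop ℝ} {r b : ℝ} (h : a + (r : WithTop ℝ) ≤ b) :
    a ≤ ((b - r : ℝ) : WithTop ℝ) := by
  induction a with
  | top => simp at h
  | coe a =>
    norm_cast at h ⊢
    linarith

lemma tendsto_zero_of_norm_sq_le_mul {F : Type*} [SeminormedAddCommGroup F] {v : ℕ → F}
    {μ : ℕ → ℝ} (hμ : Tendsto μ atTop (𝓝 0)) {C : ℝ} (hv : ∀ᶠ k in atTop, ‖v k‖ ^ 2 ≤ μ k * C) :
    Tendsto v atTop (𝓝 0) := by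
  have hsq : Tendsto (fun k => ‖v k‖ ^ 2) atTop (𝓝 0) :=
    squeeze_zero' (.of_forall fun _ => by positivity) hv (by simpa using hμ.mul_const C)
  rw [tendsto_zero_iff_norm_tendsto_zero]
  simpa [Real.sqrt_sq (norm_nonneg _)] using hsq.sqrt

theorem LowerSemicontinuous.ne_top_and_tendsto_zero_of_penalty_le {X F : Type*}
    [TopologicalSpace X] [SeminormedAddCommGroup F] {q : X → WithTop ℝ}
    (hq : LowerSemicontinuous q) {x : ℕ → X} {x₀ : X} (hx : Tendsto x atTop (𝓝 x₀))
    {μ : ℕ → ℝ} (hμpos : ∀ k, 0 < μ k) (hμ : Tendsto μ atTop (𝓝 0)) {v : ℕ → F}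
    {e : ℕ → ℝ} {E₀ : ℝ} (he : ∀ᶠ k in atTop, e k ≤ E₀) {B : ℝ}
    (hbound : ∀ k, q (x k) + (((1 / (2 * μ k)) * ‖v k‖ ^ 2 - e k : ℝ) : WithTop ℝ) ≤ B) :
    q x₀ ≠ ⊤ ∧ Tendsto v atTop (𝓝 0) := by
  have hpen : ∀ k, 0 ≤ (1 / (2 * μ k)) * ‖v k‖ ^ 2 := fun k => by
    have := hμpos k
    positivity
  have hupper : ∀ k, q (x k) ≤ ((B + e k - (1 / (2 * μ k)) * ‖v k‖ ^ 2 : ℝ) : WithTop ℝ) :=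
    fun k => (le_coe_sub_of_add_coe_le (hbound k)).trans_eq (by ring_nf)
  have hq₀ : q x₀ ≤ ((B + E₀ : ℝ) : WithTop ℝ) := by
    refine (hq.isClosed_preimage _).mem_of_tendsto hx ?_
    filter_upwards [he] with k hk
    exact (hupper k).trans (WithTop.coe_le_coe.2 (by linarith [hpen k]))
  obtain ⟨a, ha⟩ := WithTop.ne_top_iff_exists.1 (ne_top_of_le_ne_top WithTop.coe_ne_top hq₀)
  refine ⟨ha ▸ WithTop.coe_ne_top,
    tendsto_zero_of_norm_sq_le_mul hμ (C := 2 * (B + E₀ - (a - 1))) ?_⟩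
  have hlower : ∀ᶠ k in atTop, ((a - 1 : ℝ) : WithTop ℝ) < q (x k) :=
    hx.eventually <| hq x₀ _ <|
      show ((a - 1 : ℝ) : WithTop ℝ) < q x₀ from ha ▸ WithTop.coe_lt_coe.2 (sub_one_lt a)
  filter_upwards [he, hlower] with k hek hlk
  have hpen_le : (1 / (2 * μ k)) * ‖v k‖ ^ 2 ≤ B + E₀ - (a - 1) := by
    have := WithTop.coe_lt_coe.1 (hlk.trans_le (hupper k))
    linarith
  have hμk := hμpos k
  calc ‖v k‖ ^ 2 = 2 * μ k * ((1 / (2 * μ k)) * ‖v k‖ ^ 2) := by field_simp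
    _ ≤ 2 * μ k * (B + E₀ - (a - 1)) := by gcongr
    _ = μ k * (2 * (B + E₀ - (a - 1))) := by ring

theorem stmt11_general {n m : ℕ} (q : EuclideanSpace ℝ (Fin n) → WithTop ℝ)
    (hqlsc : LowerSemicontinuous q)
    (c : EuclideanSpace ℝ (Fin n) → EuclideanSpace ℝ (Fin m)) (hc : Continuous c)
    (D : Set (EuclideanSpace ℝ (Fin m))) (hDcl : IsClosed D)
    (μ : ℕ → ℝ) (hμpos : ∀ k, 0 < μ k) (hμ : Filter.Tendsto μ Filter.atTop (nhds 0))
    (yhat : ℕ → EuclideanSpace ℝ (Fin m)) (R : ℝ) (hY : ∀ k, ‖yhat k‖ ≤ R)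
    (xs : ℕ → EuclideanSpace ℝ (Fin n)) (ss : ℕ → EuclideanSpace ℝ (Fin m))
    (hsD : ∀ k, ss k ∈ D) (B : ℝ)
    (hbound : ∀ k, q (xs k) +
      (((1 / (2 * μ k)) * ‖c (xs k) + μ k • yhat k - ss k‖ ^ 2
          - (μ k / 2) * ‖yhat k‖ ^ 2 : ℝ) : WithTop ℝ) ≤ (B : WithTop ℝ))
    (φ : ℕ → ℕ) (hφ : StrictMono φ) (xstar : EuclideanSpace ℝ (Fin n))
    (hxconv : Filter.Tendsto (fun k => xs (φ k)) Filter.atTop (nhds xstar)) :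
    q xstar ≠ ⊤ ∧
    Filter.Tendsto (fun k => c (xs (φ k)) - ss (φ k)) Filter.atTop (nhds 0) ∧
    Filter.Tendsto (fun k => ss (φ k)) Filter.atTop (nhds (c xstar)) ∧
    c xstar ∈ D := by
  have hμφ : Tendsto (fun k => μ (φ k)) atTop (𝓝 0) := hμ.comp hφ.tendsto_atTop
  have hμy : Tendsto (fun k => μ (φ k) • yhat (φ k)) atTop (𝓝 0) :=
    hμφ.zero_smul_isBoundedUnder_le (isBoundedUnder_of ⟨R, fun k => hY (φ k)⟩)
  have hcorr : ∀ᶠ k in atTop, μ (φ k) / 2 * ‖yhat (φ k)‖ ^ 2 ≤ R ^ 2 / 2 := by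
    filter_upwards [hμφ.eventually_le_const one_pos] with k hk
    have hy : ‖yhat (φ k)‖ ^ 2 ≤ R ^ 2 := pow_le_pow_left₀ (norm_nonneg _) (hY (φ k)) 2
    nlinarith [hμpos (φ k), sq_nonneg ‖yhat (φ k)‖]
  obtain ⟨hqfin, hres⟩ := hqlsc.ne_top_and_tendsto_zero_of_penalty_le hxconv
    (fun k => hμpos (φ k)) hμφ hcorr (fun k => hbound (φ k))
  have hcs : Tendsto (fun k => c (xs (φ k)) - ss (φ k)) atTop (𝓝 0) := by
    have := hres.sub hμy
    rw [sub_zero] at this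
    exact this.congr fun k => by abel
  have hss : Tendsto (fun k => ss (φ k)) atTop (𝓝 (c xstar)) := by
    simpa using ((hc.tendsto xstar).comp hxconv).sub hcs
  exact ⟨hqfin, hcs, hss, hDcl.mem_of_tendsto hss (.of_forall fun k => hsD (φ k))⟩

theorem stmt11 {n m : ℕ} (q : EuclideanSpace ℝ (Fin n) → WithTop ℝ)
    (hqproper : ∃ x, q x ≠ ⊤) (hqlsc : LowerSemicontinuous q)
    (c : EuclideanSpace ℝ (Fin n) → EuclideanSpace ℝ (Fin m)) (hc : Continuous c)
    (D : Set (EuclideanSpace ℝ (Fin m))) (hDne : D.Nonempty) (hDcl : IsClosed D)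
    (μ : ℕ → ℝ) (hμpos : ∀ k, 0 < μ k) (hμ : Filter.Tendsto μ Filter.atTop (nhds 0))
    (yhat : ℕ → EuclideanSpace ℝ (Fin m)) (R : ℝ) (hY : ∀ k, ‖yhat k‖ ≤ R)
    (xs : ℕ → EuclideanSpace ℝ (Fin n)) (ss : ℕ → EuclideanSpace ℝ (Fin m))
    (hsD : ∀ k, ss k ∈ D) (B : ℝ)
    (hbound : ∀ k, q (xs k) +
      (((1 / (2 * μ k)) * ‖c (xs k) + μ k • yhat k - ss k‖ ^ 2
          - (μ k / 2) * ‖yhat k‖ ^ 2 : ℝ) : WithTop ℝ) ≤ (B : WithTop ℝ))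
    (φ : ℕ → ℕ) (hφ : StrictMono φ) (xstar : EuclideanSpace ℝ (Fin n))
    (hxconv : Filter.Tendsto (fun k => xs (φ k)) Filter.atTop (nhds xstar)) :
    q xstar ≠ ⊤ ∧
    Filter.Tendsto (fun k => c (xs (φ k)) - ss (φ k)) Filter.atTop (nhds 0) ∧
    Filter.Tendsto (fun k => ss (φ k)) Filter.atTop (nhds (c xstar)) ∧
    c xstar ∈ D :=
  stmt11_general q hqlsc c hc D hDcl μ hμpos hμ yhat R hY xs ss hsD B hbound φ hφ xstar hxconv
end
end
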